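/- For a ∈ ℂ with a ≠ 0 and a ≠ k (where k ≥ 1), the Lie subalgebra of Der(ℂ[x,y]) spanned by a·x·∂/∂x + y·∂/∂y together with ∂/∂x, ∂/∂y, y·∂/∂x, …, y^k·∂/∂x is solvable and non-nilpotent, and its derived subalgebra equals the span of ∂/∂x, ∂/∂y, y·∂/∂x, …, y^k·∂/∂x. -/

import Mathlib

open MvPolynomial

noncomputable section

/-- The polynomial ring `ℂ[x,y]`, with `x = X 0`, `y = X 1`. -/
abbrev R2 : Type := MvPolynomial (Fin 2) ℂ

/-- The Lie algebra of derivations of `ℂ[x,y]`. -/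
abbrev Der2 : Type := Derivation ℂ R2 R2

/-- The variable `x`. -/
def Xv : R2 := X 0

/-- The variable `y`. -/
def Yv : R2 := X 1

/-- The vector field (derivation) `p·∂/∂x + q·∂/∂y`. -/
def vf (p q : R2) : Der2 := MvPolynomial.mkDerivation ℂ ![p, q]

/-!
Write `E = a·x∂ₓ + y∂_y` and `Fᵢ = yⁱ∂ₓ`. The brackets are `[E, ∂_y] = -∂_y`,
`[E, Fᵢ] = (i - a)·Fᵢ`, `[∂_y, Fᵢ] = i·Fᵢ₋₁` and `[Fᵢ, Fⱼ] = 0`. Hence the derived series lands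
successively in `span(∂_y, Fᵢ)`, `span(Fᵢ)` and `0`. Since `∂_y` is an eigenvector of `ad E` with
eigenvalue `-1`, `ad E` is not nilpotent, so neither is the algebra. Conversely, the derived
algebra contains `∂_y = -[E, ∂_y]`, `Fᵢ = [∂_y, Fᵢ₊₁]/(i+1)` for `i < k`, and
`F_k = [E, F_k]/(k - a)`.
-/

section Lie

variable {R L : Type*} [CommRing R] [LieRing L] [LieAlgebra R L]

lemma lie_mem_of_mem_span {s t : Set L} {N : Submodule R L}
    (h : ∀ x ∈ s, ∀ y ∈ t, ⁅x, y⁆ ∈ N) {x y : L} (hx : x ∈ Submodule.span R s)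
    (hy : y ∈ Submodule.span R t) : ⁅x, y⁆ ∈ N :=
  LinearMap.BilinMap.apply_apply_mem_of_mem_span N s t
    (LieModule.toEnd R L L : L →ₗ[R] Module.End R L) h x y hx hy

namespace LieSubalgebra

lemma coe_lieSpan_eq_span_of_lie_mem_span {s : Set L}
    (h : ∀ x ∈ s, ∀ y ∈ s, ⁅x, y⁆ ∈ Submodule.span R s) :
    (lieSpan R L s : Set L) = Submodule.span R s := by
  let K : LieSubalgebra R L :=
    { Submodule.span R s with lie_mem' := fun hx hy => lie_mem_of_mem_span h hx hy }
  refine le_antisymm (?_ : lieSpan R L s ≤ K) submodule_span_le_lieSpan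
  exact lieSpan_le.mpr Submodule.subset_span

lemma coe_mem_of_mem_derivedSeries_succ {g : LieSubalgebra R L} {n : ℕ} {N N' : Submodule R L}
    (hN : ∀ z ∈ LieAlgebra.derivedSeries R g n, (z : L) ∈ N)
    (hNN' : ∀ x ∈ N, ∀ y ∈ N, ⁅x, y⁆ ∈ N') :
    ∀ z ∈ LieAlgebra.derivedSeries R g (n + 1), (z : L) ∈ N' := by
  intro z hz
  rw [LieAlgebra.derivedSeries_def, LieAlgebra.derivedSeriesOfIdeal_succ,
    ← LieSubmodule.mem_toSubmodule, LieSubmodule.lieIdeal_oper_eq_linear_span'] at hz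
  induction hz using Submodule.span_induction with
  | mem w hw =>
    obtain ⟨x, hx, y, hy, rfl⟩ := hw
    exact hNN' _ (hN x hx) _ (hN y hy)
  | zero => exact N'.zero_mem
  | add x y _ _ hx hy => exact N'.add_mem hx hy
  | smul c x _ hx => exact N'.smul_mem c hx

end LieSubalgebra

lemma LieAlgebra.not_isNilpotent_of_lie_eq_smul {K L : Type*} [Field K] [LieRing L]
    [LieAlgebra K L] {x y : L} {c : K} (hc : c ≠ 0) (hy : y ≠ 0) (h : ⁅x, y⁆ = c • y) :
    ¬ LieRing.IsNilpotent L := by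
  intro hL
  obtain ⟨n, hn⟩ := LieModule.exists_forall_pow_toEnd_eq_zero K L L
  have h_pow : ∀ m : ℕ, (LieModule.toEnd K L L x ^ m) y = c ^ m • y := by
    intro m
    induction m with
    | zero => simp
    | succ m ih =>
      rw [pow_succ', Module.End.mul_apply, ih, map_smul, LieModule.toEnd_apply_apply, h,
        smul_smul, pow_succ]
  have := h_pow n
  rw [hn x, LinearMap.zero_apply, eq_comm, smul_eq_zero] at this
  exact this.elim (pow_ne_zero n hc) hy

end Lie

lemma vf_apply_X0 (p q : R2) : vf p q (X 0) = p := by simp [vf, mkDerivation_X]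

lemma vf_apply_X1 (p q : R2) : vf p q (X 1) = q := by simp [vf, mkDerivation_X]

lemma vf_apply_Xv (p q : R2) : vf p q Xv = p := vf_apply_X0 p q

lemma vf_apply_Yv (p q : R2) : vf p q Yv = q := vf_apply_X1 p q

lemma eq_vf_of_apply {D : Der2} {p q : R2} (h0 : D (X 0) = p) (h1 : D (X 1) = q) :
    D = vf p q := by
  refine MvPolynomial.derivation_ext fun i => ?_
  fin_cases i
  · simpa [vf_apply_X0] using h0
  · simpa [vf_apply_X1] using h1

lemma smul_vf (c : ℂ) (p q : R2) : c • vf p q = vf (c • p) (c • q) :=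
  eq_vf_of_apply (by simp [vf_apply_X0]) (by simp [vf_apply_X1])

lemma vf_zero_zero : vf 0 0 = 0 :=
  (eq_vf_of_apply (by simp) (by simp)).symm

lemma lie_vf (p q r s : R2) :
    ⁅vf p q, vf r s⁆ = vf (vf p q r - vf r s p) (vf p q s - vf r s q) :=
  eq_vf_of_apply (by simp [Derivation.commutator_apply, vf_apply_X0])
    (by simp [Derivation.commutator_apply, vf_apply_X1])

lemma vf_apply_Yv_pow (p q : R2) (n : ℕ) : vf p q (Yv ^ n) = (n : ℂ) • (Yv ^ (n - 1) * q) := by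
  rw [Derivation.leibniz_pow, vf_apply_Yv, smul_eq_mul, Nat.cast_smul_eq_nsmul]

lemma vf_apply_C_mul (p q r : R2) (c : ℂ) : vf p q (C c * r) = C c * vf p q r := by
  rw [← smul_eq_C_mul, ← smul_eq_C_mul, Derivation.map_smul]

lemma lie_euler_dy (a : ℂ) : ⁅vf (C a * Xv) Yv, vf 0 1⁆ = (-1 : ℂ) • vf 0 1 := by
  simp [lie_vf, smul_vf, vf_apply_Xv, vf_apply_Yv]

lemma lie_euler_yPow (a : ℂ) (i : ℕ) :
    ⁅vf (C a * Xv) Yv, vf (Yv ^ i) 0⁆ = ((i : ℂ) - a) • vf (Yv ^ i) 0 := by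
  rw [lie_vf, smul_vf, vf_apply_Yv_pow, vf_apply_C_mul, vf_apply_Xv, vf_apply_Yv]
  rcases i with _ | i
  · simp [smul_eq_C_mul]
  · simp [smul_eq_C_mul, ← pow_succ, sub_mul]

lemma lie_dy_yPow (i : ℕ) : ⁅vf 0 1, vf (Yv ^ i) 0⁆ = (i : ℂ) • vf (Yv ^ (i - 1)) 0 := by
  simp [lie_vf, smul_vf, vf_apply_Yv, smul_eq_C_mul]

lemma lie_yPow_yPow (i j : ℕ) : ⁅vf (Yv ^ i) 0, vf (Yv ^ j) 0⁆ = 0 := by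
  simp [lie_vf, vf_apply_Yv, vf_zero_zero]

lemma vf_zero_one_ne_zero : vf 0 1 ≠ 0 := fun h => by
  simpa [vf_apply_Yv] using congrArg (fun D : Der2 => D Yv) h

abbrev yPowDx (s : Set ℕ) : Set Der2 := (fun i => vf (Yv ^ i) 0) '' s

section
variable {s : Set ℕ}

lemma lie_dy_yPow_mem_span (hs : ∀ i ∈ s, i - 1 ∈ s) {i : ℕ} (hi : i ∈ s) :
    ⁅vf 0 1, vf (Yv ^ i) 0⁆ ∈ Submodule.span ℂ (yPowDx s) := by
  rw [lie_dy_yPow]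
  exact Submodule.smul_mem _ _ (Submodule.subset_span ⟨i - 1, hs i hi, rfl⟩)

lemma lie_mem_span_yPowDx (hs : ∀ i ∈ s, i - 1 ∈ s) :
    ∀ x ∈ insert (vf 0 1) (yPowDx s), ∀ y ∈ insert (vf 0 1) (yPowDx s),
      ⁅x, y⁆ ∈ Submodule.span ℂ (yPowDx s) := by
  simp only [Set.forall_mem_insert, Set.forall_mem_image, lie_self, lie_yPow_yPow]
  refine ⟨⟨zero_mem _, fun i hi => lie_dy_yPow_mem_span hs hi⟩,
    fun i hi => ⟨?_, fun _ _ => zero_mem _⟩⟩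
  rw [← lie_skew]
  exact neg_mem (lie_dy_yPow_mem_span hs hi)

lemma lie_mem_span_insert_dy_yPowDx (a : ℂ) (hs : ∀ i ∈ s, i - 1 ∈ s) :
    ∀ x ∈ insert (vf (C a * Xv) Yv) (insert (vf 0 1) (yPowDx s)),
    ∀ y ∈ insert (vf (C a * Xv) Yv) (insert (vf 0 1) (yPowDx s)),
      ⁅x, y⁆ ∈ Submodule.span ℂ (insert (vf 0 1) (yPowDx s)) := by
  have h_euler : ∀ y ∈ insert (vf 0 1) (yPowDx s),
      ⁅vf (C a * Xv) Yv, y⁆ ∈ Submodule.span ℂ (insert (vf 0 1) (yPowDx s)) := by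
    rintro y (rfl | ⟨i, hi, rfl⟩)
    · rw [lie_euler_dy]
      exact Submodule.smul_mem _ _ (Submodule.subset_span (Set.mem_insert _ _))
    · rw [lie_euler_yPow]
      exact Submodule.smul_mem _ _ (Submodule.subset_span (Set.mem_insert_of_mem _ ⟨i, hi, rfl⟩))
  rintro x (rfl | hx) y (rfl | hy)
  · simp
  · exact h_euler y hy
  · rw [← lie_skew]
    exact neg_mem (h_euler x hx)
  · exact Submodule.span_mono (Set.subset_insert _ _) (lie_mem_span_yPowDx hs x hx y hy)

end

lemma isSolvable_of_le_span (a : ℂ) {s : Set ℕ} (hs : ∀ i ∈ s, i - 1 ∈ s)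
    (g : LieSubalgebra ℂ Der2)
    (hg : g.toSubmodule ≤
      Submodule.span ℂ (insert (vf (C a * Xv) Yv) (insert (vf 0 1) (yPowDx s)))) :
    LieAlgebra.IsSolvable g := by
  have h₀ : ∀ z ∈ LieAlgebra.derivedSeries ℂ g 0, (z : Der2) ∈
      Submodule.span ℂ (insert (vf (C a * Xv) Yv) (insert (vf 0 1) (yPowDx s))) :=
    fun z _ => hg z.2
  have h₁ := LieSubalgebra.coe_mem_of_mem_derivedSeries_succ h₀ fun x hx y hy =>
    lie_mem_of_mem_span (lie_mem_span_insert_dy_yPowDx a hs) hx hy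
  have h₂ := LieSubalgebra.coe_mem_of_mem_derivedSeries_succ h₁ fun x hx y hy =>
    lie_mem_of_mem_span (lie_mem_span_yPowDx hs) hx hy
  have h₃ := LieSubalgebra.coe_mem_of_mem_derivedSeries_succ (N' := ⊥) h₂ fun x hx y hy =>
    lie_mem_of_mem_span (s := yPowDx s) (t := yPowDx s)
      (by simp only [Set.forall_mem_image, lie_yPow_yPow]; exact fun _ _ _ _ => zero_mem _) hx hy
  refine (LieAlgebra.isSolvable_iff ℂ g).mpr ⟨3, (LieSubmodule.eq_bot_iff _).mpr fun z hz => ?_⟩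
  exact Subtype.ext ((Submodule.mem_bot ℂ).mp (h₃ z hz))

lemma not_isNilpotent_of_mem (a : ℂ) (g : LieSubalgebra ℂ Der2) (hE : vf (C a * Xv) Yv ∈ g)
    (hdy : vf 0 1 ∈ g) : ¬ LieRing.IsNilpotent g :=
  LieAlgebra.not_isNilpotent_of_lie_eq_smul (K := ℂ) (x := ⟨_, hE⟩) (y := ⟨_, hdy⟩) (c := -1)
    (by norm_num) (fun h => vf_zero_one_ne_zero (congrArg Subtype.val h))
    (Subtype.ext (lie_euler_dy a))

lemma span_lie_eq_span_insert_dy_yPowDx (a : ℂ) (k : ℕ) (hak : a ≠ (k : ℂ))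
    (g : LieSubalgebra ℂ Der2) (hg : (g : Set Der2) = Submodule.span ℂ
      (insert (vf (C a * Xv) Yv) (insert (vf 0 1) (yPowDx (Set.Iic k))))) :
    Submodule.span ℂ {Z : Der2 | ∃ X ∈ g, ∃ Y ∈ g, Z = ⁅X, Y⁆} =
      Submodule.span ℂ (insert (vf 0 1) (yPowDx (Set.Iic k))) := by
  have h_mem : ∀ x ∈ insert (vf (C a * Xv) Yv) (insert (vf 0 1) (yPowDx (Set.Iic k))), x ∈ g :=
    fun x hx => by rw [← SetLike.mem_coe, hg]; exact Submodule.subset_span hx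
  have h_lie : ∀ x ∈ insert (vf (C a * Xv) Yv) (insert (vf 0 1) (yPowDx (Set.Iic k))),
      ∀ y ∈ insert (vf (C a * Xv) Yv) (insert (vf 0 1) (yPowDx (Set.Iic k))),
      ⁅x, y⁆ ∈ Submodule.span ℂ {Z : Der2 | ∃ X ∈ g, ∃ Y ∈ g, Z = ⁅X, Y⁆} :=
    fun x hx y hy => Submodule.subset_span ⟨x, h_mem x hx, y, h_mem y hy, rfl⟩
  apply le_antisymm
  · rw [Submodule.span_le]
    rintro _ ⟨x, hx, y, hy, rfl⟩
    rw [← SetLike.mem_coe, hg] at hx hy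
    exact lie_mem_of_mem_span
      (lie_mem_span_insert_dy_yPowDx a fun i hi => (Nat.sub_le i 1).trans hi) hx hy
  · rw [Submodule.span_le]
    rintro _ (rfl | ⟨i, hi, rfl⟩)
    · rw [SetLike.mem_coe, ← Submodule.smul_mem_iff _ (by norm_num : (-1 : ℂ) ≠ 0),
        ← lie_euler_dy a]
      exact h_lie _ (Set.mem_insert _ _) _ (Set.mem_insert_of_mem _ (Set.mem_insert _ _))
    · rcases (Set.mem_Iic.mp hi).lt_or_eq with hlt | rfl
      · rw [SetLike.mem_coe, ← Submodule.smul_mem_iff _ (Nat.cast_add_one_ne_zero (R := ℂ) i)]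
        have h := h_lie _ (Set.mem_insert_of_mem _ (Set.mem_insert _ _)) _
          (Set.mem_insert_of_mem _ (Set.mem_insert_of_mem _ ⟨i + 1, Set.mem_Iic.mpr hlt, rfl⟩))
        rwa [lie_dy_yPow, Nat.add_sub_cancel, Nat.cast_succ] at h
      · rw [SetLike.mem_coe, ← Submodule.smul_mem_iff _ (sub_ne_zero.mpr hak.symm),
          ← lie_euler_yPow]
        exact h_lie _ (Set.mem_insert _ _) _
          (Set.mem_insert_of_mem _ (Set.mem_insert_of_mem _ ⟨i, hi, rfl⟩))

lemma insert_dx_eq_yPowDx_Iic (k : ℕ) :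
    insert (vf 1 0) {D | ∃ i, 1 ≤ i ∧ i ≤ k ∧ D = vf (Yv ^ i) 0} = yPowDx (Set.Iic k) := by
  ext D
  constructor
  · rintro (rfl | ⟨i, -, hik, rfl⟩)
    · exact ⟨0, Nat.zero_le k, by simp only [pow_zero]⟩
    · exact ⟨i, hik, rfl⟩
  · rintro ⟨_ | i, hik, rfl⟩
    · exact Or.inl (by simp only [pow_zero])
    · exact Or.inr ⟨i + 1, Nat.succ_pos i, hik, rfl⟩

theorem stmt11_general (k : ℕ) (a : ℂ) (hak : a ≠ (k : ℂ)) :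
    ∃ g : LieSubalgebra ℂ Der2,
      (g : Set Der2) = (Submodule.span ℂ
          ({vf (C a * Xv) Yv, vf 1 0, vf 0 1} ∪ {D | ∃ i, 1 ≤ i ∧ i ≤ k ∧ D = vf (Yv ^ i) 0})
            : Set Der2) ∧
      LieAlgebra.IsSolvable g ∧ ¬ LieRing.IsNilpotent g ∧
      Submodule.span ℂ {Z : Der2 | ∃ X ∈ g, ∃ Y ∈ g, Z = ⁅X, Y⁆} =
        Submodule.span ℂ ({vf 1 0, vf 0 1} ∪ {D | ∃ i, 1 ≤ i ∧ i ≤ k ∧ D = vf (Yv ^ i) 0}) := by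
  simp only [Set.insert_union, Set.singleton_union, Set.insert_comm (vf 1 0) (vf 0 1),
    insert_dx_eq_yPowDx_Iic]
  have hs : ∀ i ∈ Set.Iic k, i - 1 ∈ Set.Iic k := fun i hi => (Nat.sub_le i 1).trans hi
  have hg := LieSubalgebra.coe_lieSpan_eq_span_of_lie_mem_span fun x hx y hy =>
    Submodule.span_mono (Set.subset_insert _ _) (lie_mem_span_insert_dy_yPowDx a hs x hx y hy)
  refine ⟨_, hg, isSolvable_of_le_span a hs _ hg.le, not_isNilpotent_of_mem a _ ?_ ?_,
    span_lie_eq_span_insert_dy_yPowDx a k hak _ hg⟩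
  · exact LieSubalgebra.subset_lieSpan (Set.mem_insert _ _)
  · exact LieSubalgebra.subset_lieSpan (Set.mem_insert_of_mem _ (Set.mem_insert _ _))

/-- for a ∈ ℂ with a ≠ 0 and a ≠ k (k ≥ 1), the Lie subalgebra of
Der(ℂ[x,y]) spanned by a·x·∂/∂x + y·∂/∂y, ∂/∂x, ∂/∂y, y·∂/∂x, …, y^k·∂/∂x is solvable,
non-nilpotent, and its derived subalgebra is the span of ∂/∂x, ∂/∂y, y·∂/∂x, …, y^k·∂/∂x. -/
theorem stmt11 (k : ℕ) (hk : 1 ≤ k) (a : ℂ) (ha0 : a ≠ 0) (hak : a ≠ (k : ℂ)) :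
    ∃ g : LieSubalgebra ℂ Der2,
      (g : Set Der2) = (Submodule.span ℂ
          ({vf (C a * Xv) Yv, vf 1 0, vf 0 1} ∪ {D | ∃ i, 1 ≤ i ∧ i ≤ k ∧ D = vf (Yv ^ i) 0})
            : Set Der2) ∧
      LieAlgebra.IsSolvable g ∧ ¬ LieRing.IsNilpotent g ∧
      Submodule.span ℂ {Z : Der2 | ∃ X ∈ g, ∃ Y ∈ g, Z = ⁅X, Y⁆} =
        Submodule.span ℂ ({vf 1 0, vf 0 1} ∪ {D | ∃ i, 1 ≤ i ∧ i ≤ k ∧ D = vf (Yv ^ i) 0}) :=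
  stmt11_general k a hak
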